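/- arXiv:2602.08002 — 5 statements merged into one kernel-verified Lean document; each statement's English description precedes it below -/
import Mathlib

section
/- Let G be a connected finite simple graph with no induced P_4, let v be a vertex, and set B = V(G) \ N[v] (vertices other than v and not adjacent to v). Then for any two neighbors u, w of v, the sets N(u) ∩ B and N(w) ∩ B are comparable by inclusion: N(u) ∩ B ⊆ N(w) ∩ B or N(w) ∩ B ⊆ N(u) ∩ B. -/
/-- In a connected `P₄`-free graph `G`, for any vertex `v` and any two
neighbors `u, w` of `v`, the neighborhoods of `u` and `w` restricted to
`B = V(G) \ N[v]` are comparable by inclusion. -/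
theorem stmt_5 {V : Type*} [Fintype V] (G : SimpleGraph V)
    (hconn : G.Connected)
    (hP4 : ¬ ∃ a b c d : V, a ≠ c ∧ a ≠ d ∧ b ≠ d ∧
      G.Adj a b ∧ G.Adj b c ∧ G.Adj c d ∧
      ¬ G.Adj a c ∧ ¬ G.Adj a d ∧ ¬ G.Adj b d)
    (v u w : V) (hu : G.Adj v u) (hw : G.Adj v w) :
    (∀ x : V, x ≠ v → ¬ G.Adj v x → G.Adj u x → G.Adj w x) ∨
    (∀ x : V, x ≠ v → ¬ G.Adj v x → G.Adj w x → G.Adj u x) := by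
  by_contra h
  push_neg at h
  obtain ⟨⟨x, hx1, hx2, hx3, hx4⟩, ⟨y, hy1, hy2, hy3, hy4⟩⟩ := h
  have huy : u ≠ y := fun he => hy2 (he ▸ hu)
  by_cases huw : G.Adj u w
  · by_cases hxy : G.Adj x y
    · exact hP4 ⟨v, u, x, y, fun he => hx1 he.symm, fun he => hy1 he.symm, huy,
        hu, hx3, hxy, hx2, hy2, hy4⟩
    · exact hP4 ⟨x, u, w, y, fun he => hx2 (he ▸ hw), fun he => hy4 (he ▸ hx3),
        huy, hx3.symm, huw, hy3, fun he => hx4 he.symm, hxy, hy4⟩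
  · exact hP4 ⟨x, u, v, w, hx1, fun he => huw (he ▸ hx3), fun he => hx4 (he ▸ hx3),
      hx3.symm, hu.symm, hw, fun he => hx2 he.symm, fun he => hx4 he.symm, huw⟩
end

section
/- A finite simple graph G on n vertices in which every vertex has degree at most 2ℓ−1 and which contains no matching of size ℓ has at most (ℓ−1)(4ℓ−3) edges. -/
/-- A graph with maximum degree at most `2ℓ - 1` containing no matching of
size `ℓ` has at most `(ℓ - 1) * (4ℓ - 3)` edges. -/
theorem stmt_6 {V : Type*} [Fintype V] [DecidableEq V]
    (G : SimpleGraph V) [DecidableRel G.Adj] (ℓ : ℕ) (hℓ : 1 ≤ ℓ)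
    (hdeg : ∀ v : V, G.degree v ≤ 2 * ℓ - 1)
    (hmatch : ¬ ∃ s : Finset (Sym2 V), ↑s ⊆ G.edgeSet ∧ s.card = ℓ ∧
      (s : Set (Sym2 V)).Pairwise (fun e f => ∀ x : V, x ∈ e → x ∉ f)) :
    G.edgeFinset.card ≤ (ℓ - 1) * (4 * ℓ - 3) := by
  classical
  set P : Finset (Sym2 V) → Prop := fun s => ↑s ⊆ G.edgeSet ∧
      (s : Set (Sym2 V)).Pairwise (fun e f => ∀ x : V, x ∈ e → x ∉ f) with hP
  -- collection of matchings
  set C : Finset (Finset (Sym2 V)) := G.edgeFinset.powerset.filter P with hC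
  have hne : C.Nonempty := ⟨∅, by simp [hC, hP]⟩
  obtain ⟨M, hMC, hMmax⟩ := C.exists_max_image Finset.card hne
  have hMP : P M := (Finset.mem_filter.mp hMC).2
  have hMsub : ↑M ⊆ G.edgeSet := hMP.1
  have hMpair := hMP.2
  -- card M ≤ ℓ - 1
  have hMcard : M.card ≤ ℓ - 1 := by
    by_contra h
    have hle : ℓ ≤ M.card := by omega
    obtain ⟨t, hts, htc⟩ := Finset.exists_subset_card_eq hle
    exact hmatch ⟨t, fun e he => hMsub (hts he), htc,
      hMpair.mono (by exact_mod_cast hts)⟩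
  -- every edge meets some edge of M
  have hmeet : ∀ e ∈ G.edgeFinset, ∃ f ∈ M, ∃ x : V, x ∈ e ∧ x ∈ f := by
    intro e he
    by_contra h
    push_neg at h
    have heM : e ∉ M := by
      intro heM
      obtain ⟨x, hx⟩ : ∃ x, x ∈ e := by
        induction e using Sym2.ind with | _ a b => exact ⟨a, by simp⟩
      exact (h e heM x hx) hx
    have hins : insert e M ∈ C := by
      refine Finset.mem_filter.mpr ⟨Finset.mem_powerset.mpr ?_, ?_, ?_⟩
      · intro f hf
        rcases Finset.mem_insert.mp hf with rfl | hf
        · exact he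
        · exact SimpleGraph.mem_edgeFinset.mpr (hMsub hf)
      · intro f hf
        rcases Finset.mem_insert.mp hf with rfl | hf
        · exact SimpleGraph.mem_edgeFinset.mp he
        · exact hMsub hf
      · rw [Finset.coe_insert]
        refine Set.pairwise_insert.mpr ⟨hMpair, fun f hf _ => ?_⟩
        exact ⟨fun x hx hxf => h f hf x hx hxf,
          fun x hx hxe => h f hf x hxe hx⟩
    have := hMmax _ hins
    rw [Finset.card_insert_of_notMem heM] at this
    omega
  -- set of matched vertices
  set S : Finset V := M.biUnion (fun e => Finset.univ.filter (· ∈ e)) with hS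
  have hScard : S.card ≤ 2 * M.card := by
    calc S.card ≤ ∑ e ∈ M, (Finset.univ.filter (· ∈ e)).card :=
          Finset.card_biUnion_le
    _ ≤ ∑ e ∈ M, 2 := by
          refine Finset.sum_le_sum fun e _ => ?_
          obtain ⟨a, b⟩ := e
          refine (Finset.card_le_card (fun x hx => ?_)).trans
            ((Finset.card_insert_le a {b}).trans (by simp))
          simp only [Finset.mem_filter, Sym2.mem_iff] at hx
          rcases hx.2 with rfl | rfl <;> simp
    _ = 2 * M.card := by rw [Finset.sum_const, smul_eq_mul, mul_comm]
  -- edges outside M are covered by incidence sets of S minus M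
  have hcover : G.edgeFinset \ M ⊆ S.biUnion (fun v => G.incidenceFinset v \ M) := by
    intro e he
    rw [Finset.mem_sdiff] at he
    obtain ⟨f, hfM, x, hxe, hxf⟩ := hmeet e he.1
    refine Finset.mem_biUnion.mpr ⟨x, ?_, ?_⟩
    · exact Finset.mem_biUnion.mpr ⟨f, hfM, by simp [hxf]⟩
    · rw [Finset.mem_sdiff]
      exact ⟨(SimpleGraph.mem_incidenceFinset ..).mpr
        ⟨SimpleGraph.mem_edgeFinset.mp he.1, hxe⟩, he.2⟩
  have hperv : ∀ v ∈ S, (G.incidenceFinset v \ M).card ≤ 2 * ℓ - 2 := by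
    intro v hv
    obtain ⟨f, hfM, hvf⟩ := Finset.mem_biUnion.mp hv
    simp only [Finset.mem_filter] at hvf
    have hfinc : f ∈ G.incidenceFinset v ∩ M :=
      Finset.mem_inter.mpr ⟨(SimpleGraph.mem_incidenceFinset ..).mpr
        ⟨hMsub hfM, hvf.2⟩, hfM⟩
    have h1 : 1 ≤ (G.incidenceFinset v ∩ M).card := Finset.card_pos.mpr ⟨f, hfinc⟩
    have h2 : (G.incidenceFinset v \ M).card + (G.incidenceFinset v ∩ M).card
        = (G.incidenceFinset v).card := by
      exact Finset.card_sdiff_add_card_inter _ _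
    have h3 := hdeg v
    rw [G.card_incidenceFinset_eq_degree v] at h2
    omega
  have hout : (G.edgeFinset \ M).card ≤ S.card * (2 * ℓ - 2) := by
    calc (G.edgeFinset \ M).card ≤ _ := Finset.card_le_card hcover
    _ ≤ ∑ v ∈ S, (G.incidenceFinset v \ M).card := Finset.card_biUnion_le
    _ ≤ ∑ v ∈ S, (2 * ℓ - 2) := Finset.sum_le_sum hperv
    _ = S.card * (2 * ℓ - 2) := by rw [Finset.sum_const, smul_eq_mul]
  have htot : G.edgeFinset.card ≤ M.card + (G.edgeFinset \ M).card := by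
    have := Finset.card_sdiff_add_card G.edgeFinset M
    have h4 : G.edgeFinset.card ≤ (G.edgeFinset ∪ M).card :=
      Finset.card_le_card Finset.subset_union_left
    omega
  have hSb : S.card ≤ 2 * (ℓ - 1) := by omega
  obtain ⟨m, rfl⟩ : ∃ m, ℓ = m + 1 := ⟨ℓ - 1, by omega⟩
  have : S.card * (2 * (m + 1) - 2) ≤ 2 * m * (2 * m) := by
    have : 2 * (m+1) - 2 = 2 * m := by omega
    rw [this]
    exact Nat.mul_le_mul_right _ (by omega)
  have hfin : G.edgeFinset.card ≤ m + 2 * m * (2 * m) := by omega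
  calc G.edgeFinset.card ≤ m + 2 * m * (2 * m) := hfin
  _ = (m + 1 - 1) * (4 * (m + 1) - 3) := by
        have h5 : 4 * (m + 1) - 3 = 4 * m + 1 := by omega
        have h6 : m + 1 - 1 = m := by omega
        rw [h5, h6]; ring
end

section
/- Let G be a connected finite simple graph with no induced P_4, and let x be any vertex. Then there exists a vertex y such that every vertex of G other than x and y is adjacent to x or adjacent to y. -/
/-- In a connected `P₄`-free graph, for every vertex `x` there is a vertex
`y` such that every other vertex is adjacent to `x` or to `y`. -/
theorem stmt_16 {V : Type*} [Fintype V] (G : SimpleGraph V)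
    (hconn : G.Connected)
    (hP4 : ¬ ∃ a b c d : V, a ≠ c ∧ a ≠ d ∧ b ≠ d ∧
      G.Adj a b ∧ G.Adj b c ∧ G.Adj c d ∧
      ¬ G.Adj a c ∧ ¬ G.Adj a d ∧ ¬ G.Adj b d)
    (x : V) :
    ∃ y : V, ∀ z : V, z ≠ x → z ≠ y → G.Adj x z ∨ G.Adj y z := by
  classical
  -- Key lemma: every non-neighbor of x is at distance 2 from x.
  have dist2 : ∀ (n : ℕ) (b : V), b ≠ x → ¬ G.Adj x b → ∀ p : G.Walk x b,
      p.length ≤ n → ∃ a, G.Adj x a ∧ G.Adj a b := by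
    intro n
    induction n with
    | zero =>
      intro b hbx hxb p hp
      have := p.eq_of_length_eq_zero (Nat.le_zero.mp hp)
      exact absurd this.symm hbx
    | succ n ih =>
      intro b hbx hxb p hp
      have hnil : ¬ p.reverse.Nil := by
        intro h
        exact hbx (h.eq)
      rw [SimpleGraph.Walk.not_nil_iff] at hnil
      obtain ⟨v, hbv, q, hq⟩ := hnil
      -- q : Walk v x, hbv : Adj b v
      have hvx : v ≠ x := by
        intro h; subst h; exact hxb hbv.symm
      by_cases hxv : G.Adj x v
      · exact ⟨v, hxv, hbv.symm⟩
      · have hlen : q.reverse.length ≤ n := by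
          have h1 : p.reverse.length = q.length + 1 := by
            rw [hq, SimpleGraph.Walk.length_cons]
          have h2 : p.reverse.length = p.length := p.length_reverse
          have := h2 ▸ h1
          simp only [SimpleGraph.Walk.length_reverse]
          omega
        obtain ⟨a, hxa, hav⟩ := ih v hvx hxv q.reverse hlen
        by_cases hab : G.Adj a b
        · exact ⟨a, hxa, hab⟩
        · exfalso
          apply hP4
          refine ⟨x, a, v, b, hvx.symm, hbx.symm, ?_, hxa, hav, hbv.symm, hxv, hxb, hab⟩
          intro h; subst h; exact hxb hxa
  have dist2' : ∀ b : V, b ≠ x → ¬ G.Adj x b → ∃ a, G.Adj x a ∧ G.Adj a b := by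
    intro b hbx hxb
    obtain ⟨p⟩ := (hconn x b)
    exact dist2 p.length b hbx hxb p le_rfl
  by_cases hB : ∀ z : V, z ≠ x → G.Adj x z
  · exact ⟨x, fun z hz _ => Or.inl (hB z hz)⟩
  · push_neg at hB
    obtain ⟨b0, hb0x, hb0⟩ := hB
    obtain ⟨a0, hxa0, _⟩ := dist2' b0 hb0x hb0
    -- pick y among neighbors of x maximizing covered non-neighbors
    set A : Finset V := Finset.univ.filter (fun a => G.Adj x a) with hA
    have hAne : A.Nonempty := ⟨a0, by simp [hA, hxa0]⟩
    set f : V → ℕ := fun a =>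
      (Finset.univ.filter (fun b => b ≠ x ∧ ¬ G.Adj x b ∧ G.Adj a b)).card with hf
    obtain ⟨y, hyA, hymax⟩ := A.exists_max_image f hAne
    have hxy : G.Adj x y := by simpa [hA] using hyA
    refine ⟨y, fun z hzx hzy => ?_⟩
    by_cases hxz : G.Adj x z
    · exact Or.inl hxz
    · right
      by_contra hyz
      obtain ⟨a', hxa', ha'z⟩ := dist2' z hzx hxz
      have hya' : y ≠ a' := by
        intro h; subst h; exact hyz ha'z
      -- every non-neighbor of x adjacent to y is adjacent to a'
      have hsub : ∀ c : V, c ≠ x → ¬ G.Adj x c → G.Adj y c → G.Adj a' c := by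
        intro c hcx hxc hyc
        by_contra ha'c
        have hcz : ¬ G.Adj c z := by
          intro hczadj
          apply hP4
          refine ⟨z, c, y, x, hzy, hzx, hcx, hczadj.symm, hyc.symm, hxy.symm,
            (fun h => hyz h.symm), (fun h => hxz h.symm), (fun h => hxc h.symm)⟩
        have hcz' : c ≠ z := by
          intro h; subst h; exact hyz hyc
        have hca' : c ≠ a' := by
          intro h; subst h; exact hxc hxa'
        by_cases hya'adj : G.Adj y a'
        · apply hP4
          exact ⟨c, y, a', z, hca', hcz', hzy.symm, hyc.symm, hya'adj, ha'z, fun h => ha'c h.symm, hcz, hyz⟩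
        · apply hP4
          exact ⟨c, y, x, a', hcx, hca', hya', hyc.symm, hxy.symm, hxa', (fun h => hxc h.symm), fun h => ha'c h.symm, hya'adj⟩
      -- compare counts
      have hlt : f y < f a' := by
        apply Finset.card_lt_card
        constructor
        · intro c hc
          simp only [hf, Finset.mem_filter, Finset.mem_univ, true_and] at hc ⊢
          exact ⟨hc.1, hc.2.1, hsub c hc.1 hc.2.1 hc.2.2⟩
        · intro hss
          have hz : z ∈ Finset.univ.filter (fun b => b ≠ x ∧ ¬ G.Adj x b ∧ G.Adj a' b) := by
            simp [hzx, hxz, ha'z]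
          have := hss hz
          simp only [hf, Finset.mem_filter, Finset.mem_univ, true_and] at this
          exact hyz this.2.2
      have hle : f a' ≤ f y := hymax a' (by simp [hA, hxa'])
      omega
end

section
/- Let H be a bipartite finite simple graph with parts A and B, let Δ' = max over v ∈ B of deg_H(v), and suppose G is a bipartite graph with parts V_1, V_2 such that there is a set A_0 ⊆ V_1 with |A_0| ≥ |A| in which every set of at most Δ' vertices has at least |B| common neighbors in V_2. Then G contains a copy of H with A embedded into A_0 and B embedded into V_2. -/
/-- Greedy embedding lemma: if `H` is bipartite with parts `A`, `B` and
`Δ' = max_{v ∈ B} deg v`, and `G` is bipartite with parts `V₁`, `V₂`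
containing a set `A₀ ⊆ V₁` with `|A₀| ≥ |A|` in which every set of at most
`Δ'` vertices has at least `|B|` common neighbors in `V₂`, then `G` contains
a copy of `H` with `A` embedded into `A₀` and `B` into `V₂`. -/
theorem stmt_17 {W V : Type*} [Fintype W] [Fintype V] [DecidableEq W]
    [DecidableEq V]
    (H : SimpleGraph W) [DecidableRel H.Adj]
    (G : SimpleGraph V) [DecidableRel G.Adj]
    (A B : Finset W) (hABdisj : Disjoint A B) (hABcover : A ∪ B = Finset.univ)
    (hHbip : ∀ u v : W, H.Adj u v → (u ∈ A ∧ v ∈ B) ∨ (u ∈ B ∧ v ∈ A))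
    (Δ' : ℕ) (hΔ : ∀ v ∈ B, H.degree v ≤ Δ')
    (V₁ V₂ : Finset V) (hVdisj : Disjoint V₁ V₂)
    (hGbip : ∀ u v : V, G.Adj u v →
      (u ∈ V₁ ∧ v ∈ V₂) ∨ (u ∈ V₂ ∧ v ∈ V₁))
    (A₀ : Finset V) (hA₀ : A₀ ⊆ V₁) (hA₀card : A.card ≤ A₀.card)
    (hcommon : ∀ S : Finset V, S ⊆ A₀ → S.card ≤ Δ' →
      B.card ≤ (V₂.filter (fun y => ∀ x ∈ S, G.Adj x y)).card) :
    ∃ φ : W → V, Function.Injective φ ∧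
      (∀ u ∈ A, φ u ∈ A₀) ∧ (∀ u ∈ B, φ u ∈ V₂) ∧
      ∀ u v : W, H.Adj u v → G.Adj (φ u) (φ v) := by
  classical
  -- Handle the degenerate case where `V` is empty.
  by_cases hV : Nonempty V
  case neg =>
    have hVempty : IsEmpty V := not_nonempty_iff.mp hV
    have hA0 : A₀ = ∅ := Finset.eq_empty_of_isEmpty A₀
    have hAempty : A = ∅ := Finset.card_eq_zero.mp (by
      rw [hA0] at hA₀card; simpa using hA₀card)
    have hBempty : B = ∅ := by
      have h := hcommon ∅ (by simp) (by simp)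
      have : (V₂.filter (fun y => ∀ x ∈ (∅ : Finset V), G.Adj x y)) = ∅ :=
        Finset.eq_empty_of_isEmpty _
      rw [this] at h
      exact Finset.card_eq_zero.mp (by simpa using h)
    have hWempty : IsEmpty W := by
      constructor; intro w
      have := Finset.mem_univ w
      rw [← hABcover, hAempty, hBempty] at this
      simpa using this
    exact ⟨fun w => isEmptyElim w, fun u v h => isEmptyElim u,
      fun u hu => isEmptyElim u, fun u hu => isEmptyElim u,
      fun u v h => isEmptyElim u⟩
  case pos =>
  inhabit V
  -- base injection A → A₀
  have hcard : Fintype.card A ≤ Fintype.card A₀ := by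
    simpa [Fintype.card_coe] using hA₀card
  obtain ⟨e⟩ : Nonempty (A ↪ A₀) := Function.Embedding.nonempty_of_card_le hcard
  set φ₀ : W → V := fun u => if h : u ∈ A then (e ⟨u, h⟩ : V) else default with hφ₀
  have key : ∀ B' : Finset W, B' ⊆ B → ∃ φ : W → V,
      Set.InjOn φ (↑A ∪ ↑B') ∧ (∀ u ∈ A, φ u ∈ A₀) ∧ (∀ u ∈ B', φ u ∈ V₂) ∧
      ∀ u ∈ A, ∀ v ∈ B', H.Adj u v → G.Adj (φ u) (φ v) := by
    intro B'
    induction B' using Finset.induction_on with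
    | empty =>
      intro _
      refine ⟨φ₀, ?_, ?_, by simp, by simp⟩
      · intro u hu v hv huv
        simp only [Finset.coe_empty, Set.union_empty, Finset.mem_coe] at hu hv
        simp only [hφ₀, dif_pos hu, dif_pos hv] at huv
        have : (⟨u, hu⟩ : A) = ⟨v, hv⟩ := e.injective (Subtype.ext huv)
        exact congrArg Subtype.val this
      · intro u hu
        simp only [hφ₀, dif_pos hu]
        exact (e ⟨u, hu⟩).2
    | @insert b B' hbB' ih =>
      intro hsub
      have hbB : b ∈ B := hsub (Finset.mem_insert_self b B')
      have hB'B : B' ⊆ B := fun x hx => hsub (Finset.mem_insert_of_mem hx)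
      obtain ⟨φ, hinj, hA₀map, hV₂map, hedge⟩ := ih hB'B
      have hbA : b ∉ A := Finset.disjoint_left.mp hABdisj.symm hbB
      -- neighbors of b are in A
      have hNA : H.neighborFinset b ⊆ A := by
        intro x hx
        rw [SimpleGraph.mem_neighborFinset] at hx
        rcases hHbip b x hx with ⟨h1, h2⟩ | ⟨h1, h2⟩
        · exact absurd h1 hbA
        · exact h2
      set S : Finset V := (H.neighborFinset b).image φ with hS
      have hSA₀ : S ⊆ A₀ := by
        intro y hy
        rw [hS, Finset.mem_image] at hy
        obtain ⟨x, hx, rfl⟩ := hy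
        exact hA₀map x (hNA hx)
      have hScard : S.card ≤ Δ' := by
        calc S.card ≤ (H.neighborFinset b).card := Finset.card_image_le
        _ = H.degree b := (H.card_neighborFinset_eq_degree b)
        _ ≤ Δ' := hΔ b hbB
      set C : Finset V := V₂.filter (fun y => ∀ x ∈ S, G.Adj x y) with hC
      have hCcard : B.card ≤ C.card := hcommon S hSA₀ hScard
      have hB'lt : B'.card < B.card := Finset.card_lt_card ⟨hB'B, fun h => hbB' (h hbB)⟩
      have hnotsub : ¬ C ⊆ B'.image φ := by
        intro h
        have := Finset.card_le_card h
        have := Finset.card_image_le (s := B') (f := φ)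
        omega
      obtain ⟨y, hyC, hyim⟩ := Finset.not_subset.mp hnotsub
      have hyV₂ : y ∈ V₂ := (Finset.mem_filter.mp hyC).1
      have hyadj : ∀ x ∈ S, G.Adj x y := (Finset.mem_filter.mp hyC).2
      set ψ : W → V := Function.update φ b y with hψ
      have hψb : ψ b = y := Function.update_self b y φ
      have hψne : ∀ u, u ≠ b → ψ u = φ u := fun u hu => Function.update_of_ne hu y φ
      have hAne : ∀ u ∈ A, u ≠ b := fun u hu h => hbA (h ▸ hu)
      refine ⟨ψ, ?_, ?_, ?_, ?_⟩
      · -- injectivity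
        intro u hu v hv huv
        simp only [Finset.coe_insert, Set.mem_union, Set.mem_insert_iff,
          Finset.mem_coe] at hu hv
        by_cases hub : u = b <;> by_cases hvb : v = b
        · rw [hub, hvb]
        · exfalso
          rw [hub, hψb, hψne v hvb] at huv
          rcases hv with hv | hv | hv
          · exact Finset.disjoint_left.mp hVdisj (hA₀ (hA₀map v hv)) (huv ▸ hyV₂)
          · exact hvb hv
          · exact hyim (huv ▸ Finset.mem_image_of_mem φ hv)
        · exfalso
          rw [hvb, hψb, hψne u hub] at huv
          rcases hu with hu | hu | hu
          · exact Finset.disjoint_left.mp hVdisj (hA₀ (hA₀map u hu)) (huv ▸ hyV₂)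
          · exact hub hu
          · exact hyim (huv ▸ Finset.mem_image_of_mem φ hu)
        · rw [hψne u hub, hψne v hvb] at huv
          apply hinj _ _ huv
          · rcases hu with hu | hu | hu
            · exact Set.mem_union_left _ hu
            · exact absurd hu hub
            · exact Set.mem_union_right _ hu
          · rcases hv with hv | hv | hv
            · exact Set.mem_union_left _ hv
            · exact absurd hv hvb
            · exact Set.mem_union_right _ hv
      · intro u hu
        rw [hψne u (hAne u hu)]
        exact hA₀map u hu
      · intro u hu
        rcases Finset.mem_insert.mp hu with rfl | hu
        · rw [hψb]; exact hyV₂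
        · rw [hψne u (fun h => hbB' (h ▸ hu))]
          exact hV₂map u hu
      · intro u hu v hv hadj
        rw [hψne u (hAne u hu)]
        rcases Finset.mem_insert.mp hv with rfl | hv
        · rw [hψb]
          exact hyadj (φ u) (Finset.mem_image_of_mem φ
            ((SimpleGraph.mem_neighborFinset H v u).mpr hadj.symm))
        · rw [hψne v (fun h => hbB' (h ▸ hv))]
          exact hedge u hu v hv hadj
  obtain ⟨φ, hinj, h2, h3, h4⟩ := key B (Finset.Subset.refl B)
  have huniv : (↑A ∪ ↑B : Set W) = Set.univ := by
    rw [← Finset.coe_union, hABcover]; simp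
  refine ⟨φ, ?_, h2, h3, ?_⟩
  · intro u v h
    exact hinj (huniv ▸ Set.mem_univ u) (huniv ▸ Set.mem_univ v) h
  · intro u v hadj
    rcases hHbip u v hadj with ⟨h1, h2'⟩ | ⟨h1, h2'⟩
    · exact h4 u h1 v h2' hadj
    · exact (h4 v h2' u h1 hadj.symm).symm
end

section
/- Let G be a connected finite simple graph on n ≥ 3 vertices with no induced P_4. Then not every vertex of G can have degree less than n/4, i.e. some vertex of G has degree at least n/4. -/
section Aux

variable {V : Type*}

/-- `P₄`-freeness as in the target statement. -/
def P4Free (G : SimpleGraph V) : Prop :=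
  ¬ ∃ a b c d : V, a ≠ c ∧ a ≠ d ∧ b ≠ d ∧
      G.Adj a b ∧ G.Adj b c ∧ G.Adj c d ∧
      ¬ G.Adj a c ∧ ¬ G.Adj a d ∧ ¬ G.Adj b d

/-- There is a nonempty proper vertex subset with no edges to its complement. -/
def HasSplit (G : SimpleGraph V) : Prop :=
  ∃ S : Set V, S.Nonempty ∧ Sᶜ.Nonempty ∧ ∀ a ∈ S, ∀ b ∈ Sᶜ, ¬ G.Adj a b

lemma P4Free.compl {G : SimpleGraph V} (h : P4Free G) : P4Free Gᶜ := by
  rintro ⟨a, b, c, d, hac, had, hbd, h1, h2, h3, h4, h5, h6⟩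
  rw [SimpleGraph.compl_adj] at h1 h2 h3
  have gac : G.Adj a c := by
    by_contra hx; exact h4 ⟨hac, hx⟩
  have gad : G.Adj a d := by
    by_contra hx; exact h5 ⟨had, hx⟩
  have gbd : G.Adj b d := by
    by_contra hx; exact h6 ⟨hbd, hx⟩
  exact h ⟨b, d, a, c, fun e => h1.1 e.symm, h2.1, fun e => h3.1 e.symm,
    gbd, gad.symm, gac, fun e => h1.2 e.symm, h2.2, fun e => h3.2 e.symm⟩

lemma P4Free.induce {G : SimpleGraph V} (h : P4Free G) (s : Set V) :
    P4Free (G.induce s) := by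
  rintro ⟨a, b, c, d, hac, had, hbd, h1, h2, h3, h4, h5, h6⟩
  simp only [SimpleGraph.comap_adj, Function.Embedding.coe_subtype] at h1 h2 h3 h4 h5 h6
  exact h ⟨a.1, b.1, c.1, d.1, fun e => hac (Subtype.ext e), fun e => had (Subtype.ext e),
    fun e => hbd (Subtype.ext e), h1, h2, h3, h4, h5, h6⟩

lemma induce_compl_eq {G : SimpleGraph V} (s : Set V) :
    (G.induce s)ᶜ = Gᶜ.induce s := by
  ext a b
  simp only [SimpleGraph.compl_adj, SimpleGraph.comap_adj, Function.Embedding.coe_subtype,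
    Ne, Subtype.ext_iff]

/-- The induction step of Seinsche's argument: if the graph obtained by deleting a
vertex `v` splits, then `G` or its complement splits. -/
lemma step (G : SimpleGraph V) (hP4 : P4Free G) (v : V)
    (h : HasSplit (G.induce {w | w ≠ v})) : HasSplit G ∨ HasSplit Gᶜ := by
  obtain ⟨S', hS'ne, hS'cne, hno⟩ := h
  set A : Set V := {x | ∃ hx : x ≠ v, (⟨x, hx⟩ : {w | w ≠ v}) ∈ S'} with hA
  set B : Set V := {x | ∃ hx : x ≠ v, (⟨x, hx⟩ : {w | w ≠ v}) ∈ S'ᶜ} with hB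
  have hvA : v ∉ A := by rintro ⟨hx, -⟩; exact hx rfl
  have hvB : v ∉ B := by rintro ⟨hx, -⟩; exact hx rfl
  have hAorB : ∀ x, x ≠ v → x ∈ A ∨ x ∈ B := by
    intro x hx
    by_cases hm : (⟨x, hx⟩ : {w | w ≠ v}) ∈ S'
    · exact Or.inl ⟨hx, hm⟩
    · exact Or.inr ⟨hx, hm⟩
  have hdisj : ∀ x, x ∈ A → x ∈ B → False := by
    rintro x ⟨hx1, hm1⟩ ⟨hx2, hm2⟩
    exact hm2 hm1
  have hnoAB : ∀ a ∈ A, ∀ b ∈ B, ¬ G.Adj a b := by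
    rintro a ⟨ha, hma⟩ b ⟨hb, hmb⟩ hadj
    exact hno _ hma _ hmb hadj
  have hAne : A.Nonempty := by
    obtain ⟨⟨a, ha⟩, hmem⟩ := hS'ne
    exact ⟨a, ha, hmem⟩
  have hBne : B.Nonempty := by
    obtain ⟨⟨b, hb⟩, hmem⟩ := hS'cne
    exact ⟨b, hb, hmem⟩
  by_cases hA1 : ∃ a ∈ A, G.Adj v a
  · by_cases hB1 : ∃ b ∈ B, G.Adj v b
    · obtain ⟨a1, ha1A, ha1adj⟩ := hA1
      obtain ⟨b1, hb1B, hb1adj⟩ := hB1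
      by_cases hX : ∃ x ∈ A, ¬ G.Adj v x
      · obtain ⟨x0, hx0A, hx0⟩ := hX
        left
        refine ⟨{x | x ∈ A ∧ ¬ G.Adj v x}, ⟨x0, hx0A, hx0⟩, ⟨v, ?_⟩, ?_⟩
        · rintro ⟨hvA', -⟩; exact hvA hvA'
        · rintro x ⟨hxA, hxv⟩ y hy hadj
          rcases eq_or_ne y v with rfl | hyv
          · exact hxv hadj.symm
          rcases hAorB y hyv with hyA | hyB
          · have hvy : G.Adj v y := by
              by_contra hc; exact hy ⟨hyA, hc⟩
            refine hP4 ⟨b1, v, y, x, ?_, ?_, ?_, hb1adj.symm, hvy, hadj.symm, ?_, ?_, hxv⟩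
            · rintro rfl; exact hdisj _ hyA hb1B
            · rintro rfl; exact hdisj _ hxA hb1B
            · rintro rfl; exact hvA hxA
            · exact fun e => hnoAB y hyA b1 hb1B e.symm
            · exact fun e => hnoAB x hxA b1 hb1B e.symm
          · exact hnoAB x hxA y hyB hadj
      · by_cases hY : ∃ x ∈ B, ¬ G.Adj v x
        · obtain ⟨x0, hx0B, hx0⟩ := hY
          left
          refine ⟨{x | x ∈ B ∧ ¬ G.Adj v x}, ⟨x0, hx0B, hx0⟩, ⟨v, ?_⟩, ?_⟩
          · rintro ⟨hvB', -⟩; exact hvB hvB'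
          · rintro x ⟨hxB, hxv⟩ y hy hadj
            rcases eq_or_ne y v with rfl | hyv
            · exact hxv hadj.symm
            rcases hAorB y hyv with hyA | hyB
            · exact hnoAB y hyA x hxB hadj.symm
            · have hvy : G.Adj v y := by
                by_contra hc; exact hy ⟨hyB, hc⟩
              refine hP4 ⟨a1, v, y, x, ?_, ?_, ?_, ha1adj.symm, hvy, hadj.symm, ?_, ?_, hxv⟩
              · rintro rfl; exact hdisj _ ha1A hyB
              · rintro rfl; exact hdisj _ ha1A hxB
              · rintro rfl; exact hvB hxB
              · exact fun e => hnoAB a1 ha1A y hyB e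
              · exact fun e => hnoAB a1 ha1A x hxB e
        · -- v is adjacent to everything else
          right
          refine ⟨{v}, ⟨v, rfl⟩, ⟨a1, ?_⟩, ?_⟩
          · intro hc
            rw [Set.mem_singleton_iff] at hc
            subst hc; exact hvA ha1A
          · rintro a ha b hb hadj
            rw [Set.mem_singleton_iff] at ha
            subst ha
            rw [SimpleGraph.compl_adj] at hadj
            rcases hAorB b (fun e => hb (by simpa using e)) with hbA | hbB
            · exact hadj.2 (by by_contra hc; exact hX ⟨b, hbA, hc⟩)
            · exact hadj.2 (by by_contra hc; exact hY ⟨b, hbB, hc⟩)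
    · -- v adjacent to nothing in B
      push_neg at hB1
      left
      refine ⟨B, hBne, ⟨v, hvB⟩, ?_⟩
      intro x hxB y hy hadj
      rcases eq_or_ne y v with rfl | hyv
      · exact hB1 x hxB hadj.symm
      rcases hAorB y hyv with hyA | hyB
      · exact hnoAB y hyA x hxB hadj.symm
      · exact hy hyB
  · -- v adjacent to nothing in A
    push_neg at hA1
    left
    refine ⟨A, hAne, ⟨v, hvA⟩, ?_⟩
    intro x hxA y hy hadj
    rcases eq_or_ne y v with rfl | hyv
    · exact hA1 x hxA hadj.symm
    rcases hAorB y hyv with hyA | hyB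
    · exact hy hyA
    · exact hnoAB x hxA y hyB hadj

end Aux

/-- Seinsche's theorem, split form: a `P₄`-free graph on at least two vertices
splits, or its complement does. -/
lemma seinsche : ∀ n : ℕ, ∀ (V : Type*) [Fintype V] (G : SimpleGraph V),
    Fintype.card V = n → P4Free G → 2 ≤ n → HasSplit G ∨ HasSplit Gᶜ := by
  intro n
  induction n using Nat.strong_induction_on with
  | _ n ih =>
    intro V _ G hcard hP4 hn
    classical
    rcases eq_or_lt_of_le hn with h2 | h3
    · -- base case: exactly two vertices
      obtain ⟨x, y, hxy, hunion⟩ := Finset.card_eq_two.mp (by rw [← h2] at hcard; exact hcard)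
      have hall : ∀ w : V, w = x ∨ w = y := by
        intro w
        have : w ∈ ({x, y} : Finset V) := hunion ▸ Finset.mem_univ w
        simpa using this
      by_cases hadj : G.Adj x y
      · right
        refine ⟨{x}, ⟨x, rfl⟩, ⟨y, by simpa using hxy.symm⟩, ?_⟩
        rintro a ha b hb h
        rw [Set.mem_singleton_iff] at ha; subst ha
        rw [SimpleGraph.compl_adj] at h
        rcases hall b with rfl | rfl
        · exact h.1 rfl
        · exact h.2 hadj
      · left
        refine ⟨{x}, ⟨x, rfl⟩, ⟨y, by simpa using hxy.symm⟩, ?_⟩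
        rintro a ha b hb h
        rw [Set.mem_singleton_iff] at ha; subst ha
        rcases hall b with rfl | rfl
        · exact G.irrefl h
        · exact hadj h
    · -- step: at least three vertices, delete a vertex
      have : Nonempty V := by
        rw [← Fintype.card_pos_iff, hcard]; omega
      obtain ⟨v⟩ := this
      have hcard' : Fintype.card {w | w ≠ v} = n - 1 := by
        have h1 : Fintype.card {w : V // w = v} = 1 := Fintype.card_subtype_eq v
        have := Fintype.card_subtype_compl (fun w : V => w = v)
        rw [h1, hcard] at this
        rw [← this]; exact Fintype.card_congr (Equiv.refl _)
      have hih := ih (n - 1) (by omega) {w : V | w ≠ v} (G.induce {w | w ≠ v})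
        hcard' (hP4.induce _) (by omega)
      rcases hih with hsp | hsp
      · exact step G hP4 v hsp
      · rw [induce_compl_eq] at hsp
        rcases step Gᶜ hP4.compl v hsp with h | h
        · exact Or.inr h
        · rw [compl_compl] at h
          exact Or.inl h

/-- A split contradicts connectivity. -/
lemma no_split_of_connected {V : Type*} {G : SimpleGraph V} (hconn : G.Connected) :
    ¬ HasSplit G := by
  rintro ⟨S, ⟨s, hs⟩, ⟨t, ht⟩, hno⟩
  obtain ⟨p⟩ := hconn.preconnected s t
  have key : ∀ {a b : V}, G.Walk a b → a ∈ S → b ∉ S → False := by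
    intro a b p
    induction p with
    | nil => intro h1 h2; exact h2 h1
    | @cons u x w h p ih =>
      intro h1 h2
      by_cases hx : x ∈ S
      · exact ih hx h2
      · exact hno u h1 x hx h
  exact key p hs ht

/-- In a connected `P₄`-free graph on `n ≥ 3` vertices, not every vertex can
have degree strictly less than `n/4`. -/
theorem stmt_18 {V : Type*} [Fintype V] (G : SimpleGraph V)
    [DecidableRel G.Adj]
    (hconn : G.Connected)
    (hP4 : ¬ ∃ a b c d : V, a ≠ c ∧ a ≠ d ∧ b ≠ d ∧
      G.Adj a b ∧ G.Adj b c ∧ G.Adj c d ∧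
      ¬ G.Adj a c ∧ ¬ G.Adj a d ∧ ¬ G.Adj b d)
    (n : ℕ) (hn : n = Fintype.card V) (h3 : 3 ≤ n) :
    ¬ ∀ v : V, (G.degree v : ℚ) < (n : ℚ) / 4 := by
  classical
  intro hdeg
  have hsp := seinsche n V G hn.symm hP4 (by omega)
  rcases hsp with hsp | hsp
  · exact no_split_of_connected hconn hsp
  · obtain ⟨S, ⟨s, hs⟩, ⟨t, ht⟩, hno⟩ := hsp
    have hadj : ∀ a ∈ S, ∀ b ∈ Sᶜ, G.Adj a b := by
      intro a ha b hb
      by_contra hc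
      exact hno a ha b hb ⟨fun e => hb (e ▸ ha), hc⟩
    -- degree bound: derive 4 * degree ≥ n for a suitable vertex
    have hsum : S.toFinset.card + S.toFinsetᶜ.card = n := by
      rw [Finset.card_add_card_compl, hn]
    have hScompl : Sᶜ.toFinset = S.toFinsetᶜ := Set.toFinset_compl S
    have key : ∀ x : V, n ≤ 4 * G.degree x → False := by
      intro x hx
      have := hdeg x
      rw [lt_div_iff₀ (by norm_num : (0:ℚ) < 4)] at this
      have h4 : (G.degree x : ℚ) * 4 = ((4 * G.degree x : ℕ) : ℚ) := by
        push_cast; ring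
      rw [h4] at this
      have : (4 * G.degree x) < n := by exact_mod_cast this
      omega
    rcases le_total S.toFinset.card S.toFinsetᶜ.card with hle | hle
    · -- s has all of Sᶜ as neighbors
      have hsub : S.toFinsetᶜ ⊆ G.neighborFinset s := by
        intro y hy
        rw [SimpleGraph.mem_neighborFinset]
        exact hadj s hs y (by rw [← hScompl] at hy; simpa using hy)
      have hdegs : S.toFinsetᶜ.card ≤ G.degree s := by
        rw [← SimpleGraph.card_neighborFinset_eq_degree]
        exact Finset.card_le_card hsub
      exact key s (by omega)
    · -- t has all of S as neighbors
      have hsub : S.toFinset ⊆ G.neighborFinset t := by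
        intro y hy
        rw [SimpleGraph.mem_neighborFinset]
        exact (hadj y (by simpa using hy) t ht).symm
      have hdegt : S.toFinset.card ≤ G.degree t := by
        rw [← SimpleGraph.card_neighborFinset_eq_degree]
        exact Finset.card_le_card hsub
      exact key t (by omega)
end
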